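/- arXiv:1605.03524 — 3 statements merged into one kernel-verified Lean document; each statement's English description precedes it below -/
import Mathlib

section
/- For every integer n ≥ 1 and every 0 ≤ k ≤ n, the number of k-element antichains in the doubled root poset of type A_n equals C(n, k)². -/
/-- An element of the doubled root poset of type Aₙ: a triple `(i, j, b)` where `[i,j]`
(with `1 ≤ i ≤ j ≤ n`) is a positive root of type Aₙ (an interval), and `b` records whether
the element lies in the top copy (`true`) or the bottom copy (`false`) of the root poset.
Simple roots (`i = j`) are glued, and by convention carry `b = true`. -/
def DRootA (n : ℕ) : Type :=
  {x : ℕ × ℕ × Bool // 1 ≤ x.1 ∧ x.1 ≤ x.2.1 ∧ x.2.1 ≤ n ∧ (x.1 = x.2.1 → x.2.2 = true)}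

/-- The order relation on the doubled root poset of type Aₙ.  Top elements are ordered as in
the root poset (inclusion of intervals), bottom elements are ordered dually, and a bottom
element lies below a top element exactly when some simple root lies below both in the root
poset (for a top element that is simple this is the same as saying that the simple root lies
below the bottom element in the root poset). -/
def dleA (n : ℕ) (x y : DRootA n) : Prop :=
  (x.1.2.2 = true ∧ y.1.2.2 = true ∧ y.1.1 ≤ x.1.1 ∧ x.1.2.1 ≤ y.1.2.1) ∨
  (x.1.2.2 = false ∧ y.1.2.2 = false ∧ x.1.1 ≤ y.1.1 ∧ y.1.2.1 ≤ x.1.2.1) ∨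
  (x.1.2.2 = false ∧ y.1.2.2 = true ∧
    ∃ m : ℕ, 1 ≤ m ∧ m ≤ n ∧ x.1.1 ≤ m ∧ m ≤ x.1.2.1 ∧ y.1.1 ≤ m ∧ m ≤ y.1.2.1)

/-!
Reading a top root `[i, j]` as the pair `(i, j)` and a bottom root `[i, j]` as `(j, i)` identifies
the doubled root poset of type Aₙ with the product of two `n`-element chains, the first one
reversed. In a product of two chains an antichain is the graph of an antitone bijection between its
two projections, so a `k`-element antichain is the same thing as a pair of `k`-subsets of `[1, n]`.
-/

open Finset

variable {α β : Type*}

abbrev AntichainOfCard (r : α → α → Prop) (k : ℕ) : Type _ :=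
  {A : Finset α // IsAntichain r (A : Set α) ∧ #A = k}

def RelIso.antichainOfCardCongr {r : α → α → Prop} {s : β → β → Prop} (e : r ≃r s) (k : ℕ) :
    AntichainOfCard r k ≃ AntichainOfCard s k :=
  e.toEquiv.finsetCongr.subtypeEquiv fun A => by
    simp [IsAntichain.image_relIso_iff]

section LinearOrder

variable [LinearOrder α] [LinearOrder β]

theorem Prod.not_le_and_not_ge_iff {x y : α × β} :
    ¬x ≤ y ∧ ¬y ≤ x ↔ x.1 < y.1 ∧ y.2 < x.2 ∨ y.1 < x.1 ∧ x.2 < y.2 := by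
  simp only [Prod.le_def]
  grind

namespace IsAntichain

variable {s : Set (α × β)} {x y : α × β}

theorem snd_lt_of_fst_lt (hs : IsAntichain (· ≤ ·) s) (hx : x ∈ s) (hy : y ∈ s)
    (h : x.1 < y.1) : y.2 < x.2 := by
  have hxy : x ≠ y := ne_of_apply_ne Prod.fst h.ne
  have := Prod.not_le_and_not_ge_iff.1 ⟨hs hx hy hxy, hs hy hx hxy.symm⟩
  grind

theorem injOn_fst (hs : IsAntichain (· ≤ ·) s) : Set.InjOn Prod.fst s := by
  intro x hx y hy h
  by_contra hxy
  have := Prod.not_le_and_not_ge_iff.1 ⟨hs hx hy hxy, hs hy hx (Ne.symm hxy)⟩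
  grind

theorem injOn_snd (hs : IsAntichain (· ≤ ·) s) : Set.InjOn Prod.snd s := by
  intro x hx y hy h
  by_contra hxy
  have := Prod.not_le_and_not_ge_iff.1 ⟨hs hx hy hxy, hs hy hx (Ne.symm hxy)⟩
  grind

end IsAntichain

namespace Finset

variable {k : ℕ}

def antitoneGraph (U : Finset α) (V : Finset β) (hU : #U = k) (hV : #V = k) :
    Finset (α × β) :=
  univ.image fun i : Fin k => (U.orderEmbOfFin hU i, V.orderEmbOfFin hV i.rev)

variable {U : Finset α} {V : Finset β} (hU : #U = k) (hV : #V = k)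

theorem isAntichain_antitoneGraph :
    IsAntichain (· ≤ ·) (antitoneGraph U V hU hV : Set (α × β)) := by
  simp only [antitoneGraph, coe_image, coe_univ, Set.image_univ]
  rintro _ ⟨i, rfl⟩ _ ⟨j, rfl⟩ hij
  have hij : i ≠ j := by rintro rfl; exact hij rfl
  have key : ∀ {i j : Fin k}, i < j → U.orderEmbOfFin hU i < U.orderEmbOfFin hU j ∧
      V.orderEmbOfFin hV j.rev < V.orderEmbOfFin hV i.rev := fun h =>
    ⟨(U.orderEmbOfFin hU).strictMono h, (V.orderEmbOfFin hV).strictMono (Fin.rev_strictAnti h)⟩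
  refine (Prod.not_le_and_not_ge_iff.2 ?_).1
  rcases hij.lt_or_gt with h | h
  · exact Or.inl (key h)
  · exact Or.inr (key h)

theorem card_antitoneGraph : #(antitoneGraph U V hU hV) = k := by
  rw [antitoneGraph, card_image_of_injective, card_univ, Fintype.card_fin]
  exact fun i j h => (U.orderEmbOfFin hU).injective (congrArg Prod.fst h)

theorem image_fst_antitoneGraph : (antitoneGraph U V hU hV).image Prod.fst = U := by
  rw [antitoneGraph, image_image]
  exact image_orderEmbOfFin_univ U hU

theorem image_snd_antitoneGraph : (antitoneGraph U V hU hV).image Prod.snd = V := by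
  calc (antitoneGraph U V hU hV).image Prod.snd
      = (univ.image Fin.rev).image (V.orderEmbOfFin hV) := by
        rw [antitoneGraph, image_image, image_image]; rfl
    _ = V := by rw [image_univ_of_surjective Fin.rev_surjective, image_orderEmbOfFin_univ]

end Finset

namespace IsAntichain

variable {A : Finset (α × β)} {k : ℕ}

theorem card_image_fst (hA : IsAntichain (· ≤ ·) (A : Set (α × β))) : #(A.image Prod.fst) = #A :=
  card_image_of_injOn hA.injOn_fst

theorem card_image_snd (hA : IsAntichain (· ≤ ·) (A : Set (α × β))) : #(A.image Prod.snd) = #A :=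
  card_image_of_injOn hA.injOn_snd

theorem eq_antitoneGraph (hA : IsAntichain (· ≤ ·) (A : Set (α × β))) (hk : #A = k) :
    A = antitoneGraph (A.image Prod.fst) (A.image Prod.snd)
      (hA.card_image_fst.trans hk) (hA.card_image_snd.trans hk) := by
  set U := A.image Prod.fst
  set V := A.image Prod.snd
  have hU : #U = k := hA.card_image_fst.trans hk
  have hV : #V = k := hA.card_image_snd.trans hk
  choose σ hσA hσfst using fun i => mem_image.1 (U.orderEmbOfFin_mem hU i)
  have hσsnd : (fun i => (σ i.rev).2) = V.orderEmbOfFin hV := by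
    refine orderEmbOfFin_unique hV (fun i => mem_image_of_mem _ (hσA _)) fun i j hij => ?_
    refine hA.snd_lt_of_fst_lt (hσA _) (hσA _) ?_
    rw [hσfst, hσfst]
    exact (U.orderEmbOfFin hU).strictMono (Fin.rev_strictAnti hij)
  have hσinj : Function.Injective σ := fun i j h =>
    (U.orderEmbOfFin hU).injective (by rw [← hσfst, ← hσfst, h])
  have hAσ : univ.image σ = A := by
    refine eq_of_subset_of_card_le (image_subset_iff.2 fun i _ => hσA i) ?_
    rw [card_image_of_injective _ hσinj, card_univ, Fintype.card_fin, hk]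
  refine hAσ.symm.trans (image_congr fun i _ => Prod.ext (hσfst i) ?_)
  simpa using congrFun hσsnd i.rev

end IsAntichain

def AntichainOfCard.prodEquiv (k : ℕ) :
    AntichainOfCard (· ≤ · : α × β → α × β → Prop) k ≃
      {U : Finset α // #U = k} × {V : Finset β // #V = k} where
  toFun A := (⟨A.1.image Prod.fst, A.2.1.card_image_fst.trans A.2.2⟩,
    ⟨A.1.image Prod.snd, A.2.1.card_image_snd.trans A.2.2⟩)
  invFun p := ⟨antitoneGraph p.1.1 p.2.1 p.1.2 p.2.2, isAntichain_antitoneGraph _ _,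
    card_antitoneGraph _ _⟩
  left_inv A := Subtype.ext (A.2.1.eq_antitoneGraph A.2.2).symm
  right_inv _ := Prod.ext (Subtype.ext (image_fst_antitoneGraph _ _))
    (Subtype.ext (image_snd_antitoneGraph _ _))

theorem AntichainOfCard.card_prod [Fintype α] [Fintype β] (k : ℕ) :
    Nat.card (AntichainOfCard (· ≤ · : α × β → α × β → Prop) k) =
      (Fintype.card α).choose k * (Fintype.card β).choose k := by
  rw [Nat.card_congr (AntichainOfCard.prodEquiv k), Nat.card_prod, Nat.card_eq_fintype_card,
    Nat.card_eq_fintype_card, Fintype.card_finset_len, Fintype.card_finset_len]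

end LinearOrder

namespace DRootA

variable {n : ℕ}

def toPair (x : DRootA n) : ℕ × ℕ :=
  if x.1.2.2 then (x.1.1, x.1.2.1) else (x.1.2.1, x.1.1)

def ofPair (a b : Set.Icc 1 n) : DRootA n :=
  if h : (a : ℕ) ≤ b then ⟨((a : ℕ), (b : ℕ), true), by grind [a.2, b.2]⟩
  else ⟨((b : ℕ), (a : ℕ), false), by grind [a.2, b.2]⟩

theorem toPair_mem_Icc (x : DRootA n) :
    (toPair x).1 ∈ Set.Icc 1 n ∧ (toPair x).2 ∈ Set.Icc 1 n := by
  obtain ⟨⟨i, j, _ | _⟩, h⟩ := x <;> simp only [toPair, Set.mem_Icc] <;> grind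

theorem ofPair_toPair (x : DRootA n) :
    ofPair ⟨(toPair x).1, (toPair_mem_Icc x).1⟩ ⟨(toPair x).2, (toPair_mem_Icc x).2⟩ = x := by
  obtain ⟨⟨i, j, _ | _⟩, h⟩ := x <;> simp only [toPair, ofPair] <;> grind

theorem toPair_ofPair (a b : Set.Icc 1 n) : toPair (ofPair a b) = ((a : ℕ), (b : ℕ)) := by
  by_cases h : (a : ℕ) ≤ b <;> simp [ofPair, toPair, h]

/-- A bottom root lies below a top root iff the two intervals meet; in pair coordinates this is
the same pair of inequalities as between two roots of the same copy. -/
theorem dleA_iff (x y : DRootA n) :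
    dleA n x y ↔ (toPair y).1 ≤ (toPair x).1 ∧ (toPair x).2 ≤ (toPair y).2 := by
  obtain ⟨⟨i, j, _ | _⟩, h⟩ := x <;> obtain ⟨⟨i', j', _ | _⟩, h'⟩ := y <;>
    simp only [dleA, toPair] <;> grind

open OrderDual in
def relIsoPair (n : ℕ) : dleA n ≃r (· ≤ · : (Set.Icc 1 n)ᵒᵈ × Set.Icc 1 n → _ → Prop) where
  toFun x := (toDual ⟨(toPair x).1, (toPair_mem_Icc x).1⟩, ⟨(toPair x).2, (toPair_mem_Icc x).2⟩)
  invFun p := ofPair (ofDual p.1) p.2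
  left_inv := ofPair_toPair
  right_inv p := by ext <;> simp [toPair_ofPair]
  map_rel_iff' {x y} := (dleA_iff x y).symm

end DRootA

theorem doubledRootPosetA_antichain_count_by_size_general (n k : ℕ) :
    Nat.card {A : Finset (DRootA n) // IsAntichain (dleA n) (A : Set (DRootA n)) ∧ A.card = k} =
      Nat.choose n k ^ 2 := by
  calc Nat.card (AntichainOfCard (dleA n) k)
      = Nat.card (AntichainOfCard (· ≤ · : (Set.Icc 1 n)ᵒᵈ × Set.Icc 1 n → _ → Prop) k) :=
        Nat.card_congr ((DRootA.relIsoPair n).antichainOfCardCongr k)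
    _ = n.choose k ^ 2 := by
        rw [AntichainOfCard.card_prod, sq]
        simp

/-- The number of `k`-element antichains in the doubled root poset of type Aₙ is `C(n, k)²`. -/
theorem doubledRootPosetA_antichain_count_by_size (n k : ℕ) (hn : 1 ≤ n) (hk : k ≤ n) :
    Nat.card {A : Finset (DRootA n) // IsAntichain (dleA n) (A : Set (DRootA n)) ∧ A.card = k} =
      Nat.choose n k ^ 2 :=
  doubledRootPosetA_antichain_count_by_size_general n k
end

section
/- For every integer n ≥ 2, the polynomial identity Cat(D_n; q) = ((n+1)/2)·(1+q)·Cat(A_{n−1}; q) − ( (n−1)/2 + q + ((n−1)/2)·q² )·Cat(A_{n−2}; q) holds in ℚ[q]. -/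
/-!
Both sides are compared coefficientwise. Writing `n = m + 2`, Pascal's rule expresses every
binomial coefficient `C(m + 2, ·)` through `C(m + 1, ·)`, and the ratio
`C(m + 1, r + 1) = C(m + 1, r) · (m + 1 - r) / (r + 1)` reduces the coefficient of `q ^ (j + 2)`
to a rational function of `m`, `j` times `C(m + 1, j) ^ 2`, where the identity is a routine
computation. The coefficients of `q ^ 0` and `q ^ 1` are checked directly.
-/

open Polynomial

/-- The type-A Catalan polynomial `Cat(Aₙ; q) = Σₖ Narₖ(Aₙ) qᵏ`, where
`Narₖ(Aₙ) = (1/(n+1))·C(n+1, k)·C(n+1, k+1)` are the type-A Narayana numbers. -/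
noncomputable def catA (n : ℕ) : Polynomial ℚ :=
  ∑ k ∈ Finset.range (n + 1),
    C ((1 / ((n : ℚ) + 1)) * ((n + 1).choose k : ℚ) * ((n + 1).choose (k + 1) : ℚ)) * X ^ k

/-- The type-D Catalan polynomial `Cat(Dₙ; q) = Σₖ Narₖ(Dₙ) qᵏ` (for `n ≥ 2`), where
`Narₖ(Dₙ) = C(n, k)² - (n/(n-1))·C(n-1, k)·C(n-1, k-1)` are the type-D Narayana numbers
(with `C(n-1, k-1) = 0` when `k = 0`). -/
noncomputable def catD (n : ℕ) : Polynomial ℚ :=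
  ∑ k ∈ Finset.range (n + 1),
    C (((n.choose k : ℚ)) ^ 2 -
        ((n : ℚ) / ((n : ℚ) - 1)) * ((n - 1).choose k : ℚ) *
          (if k = 0 then 0 else ((n - 1).choose (k - 1) : ℚ))) * X ^ k

open Finset

lemma coeff_sum_range_C_mul_X_pow {R : Type*} [Semiring R] (f : ℕ → R) {N : ℕ}
    (hf : ∀ k, N ≤ k → f k = 0) (i : ℕ) :
    (∑ k ∈ range N, C (f k) * X ^ k).coeff i = f i := by
  simp only [finsetSum_coeff, coeff_C_mul_X_pow, sum_ite_eq, mem_range]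
  split_ifs with h
  · rfl
  · exact (hf i (not_lt.mp h)).symm

lemma cast_choose_succ {K : Type*} [Field K] [CharZero K] (m k : ℕ) :
    (m.choose (k + 1) : K) = m.choose k * (m - k) / (k + 1) := by
  rw [eq_div_iff k.cast_add_one_ne_zero]
  rcases le_or_gt k m with h | h
  · exact_mod_cast Nat.choose_succ_right_eq m k
  · simp [Nat.choose_eq_zero_of_lt h, Nat.choose_eq_zero_of_lt (h.trans k.lt_succ_self)]

noncomputable def narayanaA (n k : ℕ) : ℚ :=
  1 / ((n : ℚ) + 1) * ((n + 1).choose k : ℚ) * ((n + 1).choose (k + 1) : ℚ)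

noncomputable def narayanaD (n k : ℕ) : ℚ :=
  (n.choose k : ℚ) ^ 2 -
    (n : ℚ) / ((n : ℚ) - 1) * ((n - 1).choose k : ℚ) *
      (if k = 0 then 0 else ((n - 1).choose (k - 1) : ℚ))

lemma coeff_catA (n k : ℕ) : (catA n).coeff k = narayanaA n k :=
  coeff_sum_range_C_mul_X_pow (narayanaA n) (fun k hk => by
    simp [narayanaA, Nat.choose_eq_zero_of_lt (show n + 1 < k + 1 by omega)]) k

lemma coeff_catD (n k : ℕ) : (catD n).coeff k = narayanaD n k :=
  coeff_sum_range_C_mul_X_pow (narayanaD n) (fun k hk => by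
    simp [narayanaD, Nat.choose_eq_zero_of_lt (show n < k by omega),
      Nat.choose_eq_zero_of_lt (show n - 1 < k by omega)]) k

lemma narayanaA_zero (n : ℕ) : narayanaA n 0 = 1 := by
  simp only [narayanaA, Nat.choose_zero_right, zero_add, Nat.choose_one_right]
  push_cast
  field_simp

lemma narayanaA_one (n : ℕ) : narayanaA n 1 = n * (n + 1) / 2 := by
  simp only [narayanaA, Nat.choose_one_right, Nat.reduceAdd, Nat.cast_choose_two]
  push_cast
  field_simp
  ring

lemma narayanaD_zero (n : ℕ) : narayanaD n 0 = 1 := by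
  simp [narayanaD]

lemma narayanaD_one {n : ℕ} (hn : n ≠ 1) : narayanaD n 1 = n * (n - 1) := by
  have h : (n : ℚ) - 1 ≠ 0 := sub_ne_zero.mpr (by exact_mod_cast hn)
  rcases Nat.eq_zero_or_pos n with rfl | hpos
  · simp [narayanaD]
  · simp only [narayanaD, Nat.choose_one_right, Nat.cast_pred hpos, one_ne_zero, if_false,
      Nat.sub_self, Nat.choose_zero_right, Nat.cast_one]
    field_simp

lemma narayanaD_add_two (m j : ℕ) :
    narayanaD (m + 2) (j + 2) =
      ((m : ℚ) + 3) / 2 * (narayanaA (m + 1) (j + 2) + narayanaA (m + 1) (j + 1)) -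
        (((m : ℚ) + 1) / 2 * (narayanaA m (j + 2) + narayanaA m j) + narayanaA m (j + 1)) := by
  have pascal (r : ℕ) :
      ((m + 2).choose (r + 1) : ℚ) = (m + 1).choose r + (m + 1).choose (r + 1) := by
    exact_mod_cast Nat.choose_succ_succ' (m + 1) r
  have h1 := cast_choose_succ (K := ℚ) (m + 1) j
  have h2 := cast_choose_succ (K := ℚ) (m + 1) (j + 1)
  have h3 := cast_choose_succ (K := ℚ) (m + 1) (j + 2)
  simp only [narayanaD, narayanaA, pascal, add_assoc, Nat.reduceAdd, Nat.reduceSubDiff,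
    Nat.add_eq_zero_iff, OfNat.ofNat_ne_zero, and_false, if_false]
  rw [h3, h2, h1]
  push_cast
  rw [show (m : ℚ) + 2 - 1 = m + 1 by ring]
  field_simp
  ring

/-- The identity
`Cat(Dₙ; q) = ((n+1)/2)(1+q)·Cat(Aₙ₋₁; q) - ((n-1)/2 + q + ((n-1)/2)q²)·Cat(Aₙ₋₂; q)`. -/
theorem catD_from_catA (n : ℕ) (hn : 2 ≤ n) :
    catD n = C (((n : ℚ) + 1) / 2) * (1 + X) * catA (n - 1) -
      (C (((n : ℚ) - 1) / 2) + X + C (((n : ℚ) - 1) / 2) * X ^ 2) * catA (n - 2) := by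
  obtain ⟨m, rfl⟩ := Nat.exists_eq_add_of_le' hn
  ext k
  simp only [Nat.add_sub_cancel, Nat.reduceSubDiff, coeff_catD, coeff_sub, coeff_add,
    coeff_C_mul, mul_add, add_mul, one_mul, pow_two, mul_assoc, Nat.cast_add, Nat.cast_ofNat]
  match k with
  | 0 =>
    simp only [coeff_X_mul_zero, coeff_catA, narayanaD_zero, narayanaA_zero]
    ring
  | 1 =>
    simp only [coeff_X_mul, coeff_X_mul_zero, coeff_catA, narayanaD_one (by omega : m + 2 ≠ 1),
      narayanaA_one, narayanaA_zero]
    push_cast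
    ring
  | j + 2 =>
    simp only [coeff_X_mul, coeff_catA, narayanaD_add_two]
    ring
end

section
/- For every integer n ≥ 0, the polynomial identity Cat(B_n; q) = Cat⁺⁺(B_n; q) + (1+q)·Σ_{i=0}^{n−1} Cat⁺⁺(A_i; q)·Cat(B_{n−i−1}; q) holds. -/
open Polynomial

/-- A positive root of type Aₙ: an interval `[i, j]` with `1 ≤ i ≤ j ≤ n`. -/
def ARoot (n : ℕ) : Type := {p : ℕ × ℕ // 1 ≤ p.1 ∧ p.1 ≤ p.2 ∧ p.2 ≤ n}

/-- The root poset order of type Aₙ: containment of intervals. -/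
def aLe (n : ℕ) (x y : ARoot n) : Prop := y.1.1 ≤ x.1.1 ∧ x.1.2 ≤ y.1.2

/-- `x` is a simple root of type Aₙ: a singleton interval. -/
def aSimple (n : ℕ) (x : ARoot n) : Prop := x.1.1 = x.1.2

/-- A set `A` of type-Aₙ roots has full support: the union of its intervals is `{1, …, n}`. -/
def aFullSupport (n : ℕ) (A : Finset (ARoot n)) : Prop :=
  ∀ m : ℕ, 1 ≤ m → m ≤ n → ∃ x ∈ A, x.1.1 ≤ m ∧ m ≤ x.1.2

/-- `Cat⁺⁺(Aₙ; q) = Σ_A q^|A|`, the sum over antichains `A` in the root poset of type Aₙ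
that contain no simple root and have full support. -/
noncomputable def CatppA (n : ℕ) : Polynomial ℚ :=
  ∑ᶠ A ∈ {A : Finset (ARoot n) | IsAntichain (aLe n) (A : Set (ARoot n)) ∧
      (∀ x ∈ A, ¬ aSimple n x) ∧ aFullSupport n A}, X ^ A.card

/-- The `i`-th standard basis vector of `ℤⁿ`. -/
def ev (n : ℕ) (i : Fin n) : Fin n → ℤ := Pi.single i 1

/-- The simple roots of type Bₙ (0-indexed): `αᵢ = eᵢ - eᵢ₊₁` for `i < n-1`, and
`α_{n-1} = e_{n-1}`. -/
def simpleB (n : ℕ) (i : Fin n) : Fin n → ℤ :=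
  if h : (i : ℕ) + 1 < n then ev n i - ev n ⟨(i : ℕ) + 1, h⟩ else ev n i

/-- A positive root of type Bₙ: `eᵢ`, or `eᵢ - eⱼ` or `eᵢ + eⱼ` for `i < j`. -/
def BRoot (n : ℕ) : Type :=
  {v : Fin n → ℤ //
    (∃ i, v = ev n i) ∨ ∃ i j : Fin n, i < j ∧ (v = ev n i - ev n j ∨ v = ev n i + ev n j)}

/-- The root poset order of type Bₙ: `x ≤ y` iff `y - x` is a nonnegative integer
combination of the simple roots. -/
def bLe (n : ℕ) (x y : BRoot n) : Prop :=
  ∃ c : Fin n → ℕ, y.1 - x.1 = ∑ i, (c i : ℤ) • simpleB n i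

/-- `x` is a simple root of type Bₙ. -/
def bSimple (n : ℕ) (x : BRoot n) : Prop := ∃ i, x.1 = simpleB n i

/-- A set `A` of type-Bₙ roots has full support: every simple root appears with nonzero
coefficient in the expansion (in the basis of simple roots) of some element of `A`. -/
def bFullSupport (n : ℕ) (A : Finset (BRoot n)) : Prop :=
  ∀ i : Fin n, ∃ x ∈ A, ∃ c : Fin n → ℤ, x.1 = ∑ j, c j • simpleB n j ∧ c i ≠ 0

/-- `Cat(Bₙ; q) = Σ_A q^|A|`, the sum over all antichains `A` in the root poset of
type Bₙ. -/
noncomputable def CatB (n : ℕ) : Polynomial ℚ :=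
  ∑ᶠ A ∈ {A : Finset (BRoot n) | IsAntichain (bLe n) (A : Set (BRoot n))}, X ^ A.card

/-- `Cat⁺⁺(Bₙ; q) = Σ_A q^|A|`, the sum over antichains `A` in the root poset of type Bₙ
that contain no simple root and have full support. -/
noncomputable def CatppB (n : ℕ) : Polynomial ℚ :=
  ∑ᶠ A ∈ {A : Finset (BRoot n) | IsAntichain (bLe n) (A : Set (BRoot n)) ∧
      (∀ x ∈ A, ¬ bSimple n x) ∧ bFullSupport n A}, X ^ A.card


/-!
Expand the positive roots of type Bₙ in the simple roots: the coefficient of `αⱼ` in a root is a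
partial sum of its coordinates, and the root order is the coefficientwise order. Call `j` a break
of an antichain `A` if `αⱼ ∈ A` or no element of `A` involves `αⱼ`; the antichains without a break
are exactly those counted by `Cat⁺⁺(Bₙ)`. If `m` is the first break of `A`, every element of `A`
other than `αₘ` avoids `αₘ`, so it is supported either on `α₀, …, α_{m-1}`, where it is a root of
type Aₘ, or on `α_{m+1}, …, α_{n-1}`, where it is a shifted root of type B_{n-m-1}, and roots of
different blocks are incomparable. Hence `A` is the disjoint union of an optional `αₘ`, an
antichain of type Aₘ that has no simple root and full support (no `j < m` is a break), and an
arbitrary antichain of type B_{n-m-1}; this bijection produces the term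
`(1 + q) Cat⁺⁺(Aₘ; q) Cat(B_{n-m-1}; q)`.
-/

open Finset

lemma finsum_mem_setOf_eq_sum_filter {α M : Type*} [Fintype α] [AddCommMonoid M] (p : α → Prop)
    [DecidablePred p] (f : α → M) : ∑ᶠ a ∈ {a | p a}, f a = ∑ a ∈ univ.filter p, f a := by
  rw [finsum_mem_eq_toFinset_sum, Set.toFinset_ofPred]

lemma sum_powerset_singleton_pow_card {α R : Type*} [DecidableEq α] [CommSemiring R] (a : α)
    (x : R) : ∑ S ∈ ({a} : Finset α).powerset, x ^ #S = 1 + x := by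
  rw [← insert_empty_eq a, sum_powerset_insert (notMem_empty a)]
  simp

instance (n : ℕ) : Finite (ARoot n) :=
  Finite.of_injective
    (fun r : ARoot n =>
      ((⟨r.1.1, by grind [r.2]⟩ : Fin (n + 1)), (⟨r.1.2, by grind [r.2]⟩ : Fin (n + 1))))
    fun r s h => by
      simp only [Prod.mk.injEq, Fin.mk.injEq] at h
      exact Subtype.ext (Prod.ext h.1 h.2)

-- Every positive root is `eᵢ + c • eⱼ` with `c ∈ {-1, 0, 1}`.
instance (n : ℕ) : Finite (BRoot n) := by
  refine Set.Finite.to_subtype ((Set.finite_range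
    fun p : Fin n × Fin n × Fin 3 => ev n p.1 + ((p.2.2 : ℤ) - 1) • ev n p.2.1).subset ?_)
  rintro v (⟨i, rfl⟩ | ⟨i, j, -, rfl | rfl⟩)
  · exact ⟨(i, i, 1), by simp⟩
  · exact ⟨(i, j, 0), by simp [sub_eq_add_neg]⟩
  · exact ⟨(i, j, 2), by simp⟩

noncomputable instance (n : ℕ) : Fintype (ARoot n) := Fintype.ofFinite _

noncomputable instance (n : ℕ) : Fintype (BRoot n) := Fintype.ofFinite _

instance (n : ℕ) : Std.Antisymm (aLe n) :=
  ⟨fun _ _ hrs hsr => Subtype.ext (Prod.ext (le_antisymm hsr.1 hrs.1) (le_antisymm hrs.2 hsr.2))⟩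

/-- The coefficient of `αⱼ` in the expansion of `v` in the simple roots of type Bₙ. -/
def simpleCoeff {n : ℕ} (j : ℕ) : (Fin n → ℤ) →+ ℤ where
  toFun v := ∑ i : Fin n with i.val ≤ j, v i
  map_zero' := by simp
  map_add' u v := by simp [sum_add_distrib]

section SimpleCoeff

variable {n : ℕ}

lemma simpleCoeff_apply (j : ℕ) (v : Fin n → ℤ) :
    simpleCoeff j v = ∑ i : Fin n with i.val ≤ j, v i := rfl

lemma simpleCoeff_ev (a : Fin n) (j : ℕ) :
    simpleCoeff j (ev n a) = if (a : ℕ) ≤ j then 1 else 0 := by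
  simp [simpleCoeff_apply, ev]

lemma simpleCoeff_simpleB (i : Fin n) {j : ℕ} (hj : j < n) :
    simpleCoeff j (simpleB n i) = if j = i then 1 else 0 := by
  unfold simpleB
  split_ifs <;> simp only [map_sub, simpleCoeff_ev] <;> split_ifs <;> omega

lemma simpleCoeff_sum_smul_simpleB (c : Fin n → ℤ) (j : Fin n) :
    simpleCoeff j (∑ i, c i • simpleB n i) = c j := by
  simp only [map_sum, map_zsmul, simpleCoeff_simpleB _ j.isLt, smul_eq_mul, mul_ite, mul_one,
    mul_zero, Fin.val_eq_val, sum_ite_eq, mem_univ, if_true]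

lemma simpleCoeff_sub_simpleCoeff_pred (v : Fin n → ℤ) (k : Fin n) :
    simpleCoeff k v - (if (k : ℕ) = 0 then 0 else simpleCoeff (k - 1) v) = v k := by
  rw [show v k = ∑ i, if i = k then v i else 0 by simp]
  split_ifs with hk
  · rw [sub_zero, simpleCoeff_apply, sum_filter]
    refine sum_congr rfl fun i _ => ?_
    simp only [Fin.ext_iff]
    split_ifs <;> omega
  · rw [simpleCoeff_apply, simpleCoeff_apply, sum_filter, sum_filter, ← sum_sub_distrib]
    refine sum_congr rfl fun i _ => ?_
    simp only [Fin.ext_iff]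
    split_ifs <;> omega

lemma eq_of_simpleCoeff_eq {u v : Fin n → ℤ} (h : ∀ j < n, simpleCoeff j u = simpleCoeff j v) :
    u = v := by
  funext k
  rw [← simpleCoeff_sub_simpleCoeff_pred u, ← simpleCoeff_sub_simpleCoeff_pred v,
    h k k.isLt, h (k - 1) (by omega)]

lemma sum_simpleCoeff_smul_simpleB (v : Fin n → ℤ) :
    ∑ i : Fin n, simpleCoeff i v • simpleB n i = v :=
  eq_of_simpleCoeff_eq fun j hj => simpleCoeff_sum_smul_simpleB _ ⟨j, hj⟩

end SimpleCoeff

namespace BRoot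

variable {n : ℕ}

def coeff (x : BRoot n) (j : ℕ) : ℤ := simpleCoeff j x.1

lemma ext_coeff {x y : BRoot n} (h : ∀ j < n, x.coeff j = y.coeff j) : x = y :=
  Subtype.ext (eq_of_simpleCoeff_eq h)

lemma bLe_iff_coeff_le {x y : BRoot n} : bLe n x y ↔ ∀ j < n, x.coeff j ≤ y.coeff j := by
  constructor
  · rintro ⟨c, hc⟩ j hj
    have h : simpleCoeff j (y.1 - x.1) = c ⟨j, hj⟩ := by
      rw [hc]
      exact simpleCoeff_sum_smul_simpleB (fun i => (c i : ℤ)) ⟨j, hj⟩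
    rw [map_sub] at h
    unfold coeff
    omega
  · intro h
    refine ⟨fun i => (y.coeff i - x.coeff i).toNat, ?_⟩
    rw [← sum_simpleCoeff_smul_simpleB (y.1 - x.1)]
    refine sum_congr rfl fun i _ => ?_
    rw [Int.toNat_of_nonneg (sub_nonneg.2 (h i i.isLt)), map_sub]
    rfl

instance : Std.Refl (bLe n) := ⟨fun _ => bLe_iff_coeff_le.2 fun _ _ => le_rfl⟩

instance : Std.Antisymm (bLe n) :=
  ⟨fun _ _ hxy hyx => ext_coeff fun j hj =>
    le_antisymm (bLe_iff_coeff_le.1 hxy j hj) (bLe_iff_coeff_le.1 hyx j hj)⟩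

lemma coeff_nonneg (x : BRoot n) (j : ℕ) : 0 ≤ x.coeff j := by
  rcases x.2 with ⟨a, ha⟩ | ⟨a, b, hab : (a : ℕ) < b, ha | ha⟩ <;>
    simp only [coeff, ha, map_add, map_sub, simpleCoeff_ev] <;> split_ifs <;> omega

lemma exists_coeff_pos (x : BRoot n) : ∃ j < n, 0 < x.coeff j := by
  rcases x.2 with ⟨a, ha⟩ | ⟨a, b, hab : (a : ℕ) < b, ha | ha⟩ <;> refine ⟨a, a.isLt, ?_⟩ <;>
    simp only [coeff, ha, map_add, map_sub, simpleCoeff_ev] <;> split_ifs <;> omega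

def simpleRoot (i : Fin n) : BRoot n :=
  ⟨simpleB n i, by
    unfold simpleB
    split_ifs with h
    exacts [Or.inr ⟨i, ⟨i + 1, h⟩, Fin.lt_def.2 (Nat.lt_succ_self _), Or.inl rfl⟩, Or.inl ⟨i, rfl⟩]⟩

lemma coeff_simpleRoot (i : Fin n) {j : ℕ} (hj : j < n) :
    (simpleRoot i).coeff j = if j = i then 1 else 0 :=
  simpleCoeff_simpleB i hj

lemma simpleRoot_injective : Function.Injective (simpleRoot (n := n)) := by
  intro i j h
  have : (simpleRoot i).coeff i = (simpleRoot j).coeff i := by rw [h]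
  rw [coeff_simpleRoot _ i.isLt, coeff_simpleRoot _ i.isLt, if_pos rfl] at this
  split_ifs at this with hij
  exacts [Fin.ext hij, absurd this one_ne_zero]

lemma bSimple_iff {x : BRoot n} : bSimple n x ↔ ∃ i, x = simpleRoot i :=
  ⟨fun ⟨i, h⟩ => ⟨i, Subtype.ext h⟩, fun ⟨i, h⟩ => ⟨i, h ▸ rfl⟩⟩

lemma bFullSupport_iff {A : Finset (BRoot n)} :
    bFullSupport n A ↔ ∀ i : Fin n, ∃ x ∈ A, x.coeff i ≠ 0 := by
  refine forall_congr' fun i => exists_congr fun x => and_congr_right fun _ => ⟨?_, ?_⟩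
  · rintro ⟨c, hc, hci⟩
    rwa [coeff, hc, simpleCoeff_sum_smul_simpleB]
  · exact fun h => ⟨fun j => x.coeff j, (sum_simpleCoeff_smul_simpleB x.1).symm, h⟩

lemma simpleRoot_bLe_iff {i : Fin n} {x : BRoot n} :
    bLe n (simpleRoot i) x ↔ x.coeff i ≠ 0 := by
  rw [bLe_iff_coeff_le]
  constructor
  · intro h
    have := h i i.isLt
    rw [coeff_simpleRoot i i.isLt, if_pos rfl] at this
    omega
  · intro h j hj
    rw [coeff_simpleRoot i hj]
    split_ifs with hji
    · have := x.coeff_nonneg j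
      subst hji
      omega
    · exact x.coeff_nonneg j

lemma bLe_simpleRoot_iff {i : Fin n} {x : BRoot n} :
    bLe n x (simpleRoot i) ↔ x = simpleRoot i := by
  refine ⟨fun h => ?_, fun h => h ▸ refl _⟩
  rw [bLe_iff_coeff_le] at h
  obtain ⟨j, hj, hpos⟩ := x.exists_coeff_pos
  have hji := h j hj
  rw [coeff_simpleRoot i hj] at hji
  obtain rfl : j = i := by
    by_contra hne
    rw [if_neg hne] at hji
    omega
  refine ext_coeff fun l hl => ?_
  have hl' := h l hl
  have := x.coeff_nonneg l
  rw [coeff_simpleRoot i hl] at hl' ⊢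
  split_ifs at hl' ⊢ with hli
  · subst hli
    omega
  · omega

lemma not_bLe_simpleRoot_of_coeff_eq_zero {i : Fin n} {x : BRoot n} (hx : x.coeff i = 0) :
    ¬ bLe n (simpleRoot i) x ∧ ¬ bLe n x (simpleRoot i) := by
  rw [simpleRoot_bLe_iff, bLe_simpleRoot_iff]
  refine ⟨not_not.2 hx, ?_⟩
  rintro rfl
  rw [coeff_simpleRoot i i.isLt, if_pos rfl] at hx
  exact one_ne_zero hx

def IsBreak (A : Finset (BRoot n)) (j : Fin n) : Prop :=
  simpleRoot j ∈ A ∨ ∀ x ∈ A, x.coeff j = 0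

lemma not_isBreak_iff {A : Finset (BRoot n)} {j : Fin n} :
    ¬ IsBreak A j ↔ simpleRoot j ∉ A ∧ ∃ x ∈ A, x.coeff j ≠ 0 := by
  simp [IsBreak]

lemma isBreak_iff_of_isAntichain {A : Finset (BRoot n)}
    (hA : IsAntichain (bLe n) (A : Set (BRoot n))) {j : Fin n} :
    IsBreak A j ↔ ∀ x ∈ A, x ≠ simpleRoot j → x.coeff j = 0 := by
  refine ⟨?_, fun h => ?_⟩
  · rintro (hj | hj) x hx hne
    · by_contra hx0
      exact hA hj hx hne.symm (simpleRoot_bLe_iff.2 hx0)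
    · exact hj x hx
  · by_cases hj : simpleRoot j ∈ A
    · exact Or.inl hj
    · exact Or.inr fun x hx => h x hx (ne_of_mem_of_not_mem hx hj)

lemma forall_not_isBreak_iff {A : Finset (BRoot n)} :
    (∀ j, ¬ IsBreak A j) ↔ (∀ x ∈ A, ¬ bSimple n x) ∧ bFullSupport n A := by
  simp only [not_isBreak_iff, forall_and, bFullSupport_iff, bSimple_iff]
  exact and_congr_left fun _ =>
    ⟨fun h x hx ⟨i, hi⟩ => h i (hi ▸ hx), fun h i hi => h _ hi ⟨i, rfl⟩⟩

open scoped Classical in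
noncomputable def firstBreak (A : Finset (BRoot n)) : Option (Fin n) :=
  if h : ∃ j, IsBreak A j then some (Fin.find _ h) else none

lemma firstBreak_eq_none_iff {A : Finset (BRoot n)} :
    firstBreak A = none ↔ ∀ j, ¬ IsBreak A j := by
  unfold firstBreak
  split_ifs with h <;> simpa using h

lemma firstBreak_eq_some_iff {A : Finset (BRoot n)} {m : Fin n} :
    firstBreak A = some m ↔ IsBreak A m ∧ ∀ j < m, ¬ IsBreak A j := by
  classical
  unfold firstBreak
  split_ifs with h
  · rw [Option.some_inj, Fin.find_eq_iff]
  · simp only [false_iff]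
    exact fun hm => h ⟨m, hm.1⟩

end BRoot

open BRoot

section Antichains

open scoped Classical

noncomputable def bAntichains (n : ℕ) : Finset (Finset (BRoot n)) :=
  univ.filter fun A => IsAntichain (bLe n) (A : Set (BRoot n))

noncomputable def aAntichainsPP (m : ℕ) : Finset (Finset (ARoot m)) :=
  univ.filter fun A => IsAntichain (aLe m) (A : Set (ARoot m)) ∧ (∀ x ∈ A, ¬ aSimple m x) ∧
    aFullSupport m A

lemma mem_bAntichains {n : ℕ} {A : Finset (BRoot n)} :
    A ∈ bAntichains n ↔ IsAntichain (bLe n) (A : Set (BRoot n)) := by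
  simp [bAntichains]

lemma CatB_eq_sum (n : ℕ) : CatB n = ∑ A ∈ bAntichains n, X ^ #A :=
  finsum_mem_setOf_eq_sum_filter _ _

lemma CatppA_eq_sum (m : ℕ) : CatppA m = ∑ A ∈ aAntichainsPP m, X ^ #A :=
  finsum_mem_setOf_eq_sum_filter _ _

lemma CatB_eq_CatppB_add_sum_firstBreak (n : ℕ) :
    CatB n = CatppB n + ∑ m : Fin n, ∑ A ∈ bAntichains n with firstBreak A = some m, X ^ #A := by
  rw [CatB_eq_sum, CatppB, finsum_mem_setOf_eq_sum_filter, ← sum_fiberwise _ firstBreak,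
    Fintype.sum_option, bAntichains, filter_filter]
  simp only [← forall_not_isBreak_iff, firstBreak_eq_none_iff]

end Antichains

section Blocks

variable {m k : ℕ}

-- The interval `[p, q]` of type Aₘ becomes `e_{p-1} - e_q = α_{p-1} + ⋯ + α_{q-1}`.
def ARoot.toBRoot (k : ℕ) (r : ARoot m) : BRoot (m + 1 + k) :=
  ⟨ev _ ⟨r.1.1 - 1, by grind [r.2]⟩ - ev _ ⟨r.1.2, by grind [r.2]⟩,
    Or.inr ⟨_, _, Fin.lt_def.2 (by grind [r.2]), Or.inl rfl⟩⟩

lemma ARoot.coeff_toBRoot (r : ARoot m) (j : ℕ) :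
    (r.toBRoot k).coeff j = if r.1.1 ≤ j + 1 ∧ j + 1 ≤ r.1.2 then 1 else 0 := by
  have := r.2
  simp only [toBRoot, BRoot.coeff, map_sub, simpleCoeff_ev]
  split_ifs <;> omega

lemma ARoot.toBRoot_bLe_toBRoot_iff (r s : ARoot m) :
    bLe _ (r.toBRoot k) (s.toBRoot k) ↔ aLe m r s := by
  have := r.2
  have := s.2
  simp only [bLe_iff_coeff_le, coeff_toBRoot, aLe]
  constructor
  · intro h
    have h₁ := h (r.1.1 - 1) (by omega)
    have h₂ := h (r.1.2 - 1) (by omega)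
    split_ifs at h₁ h₂ <;> omega
  · intro h j _
    split_ifs <;> omega

lemma append_zero_ev (a : Fin k) :
    Fin.append (0 : Fin (m + 1) → ℤ) (ev k a) = ev (m + 1 + k) (Fin.natAdd (m + 1) a) := by
  ext i
  refine Fin.addCases (fun i => ?_) (fun i => ?_) i <;> simp [ev, Pi.single_apply, Fin.ext_iff]
  omega

lemma append_zero_add (u v : Fin k → ℤ) :
    Fin.append (0 : Fin (m + 1) → ℤ) (u + v) = Fin.append 0 u + Fin.append 0 v := by
  ext i
  refine Fin.addCases (fun i => ?_) (fun i => ?_) i <;> simp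

lemma append_zero_sub (u v : Fin k → ℤ) :
    Fin.append (0 : Fin (m + 1) → ℤ) (u - v) = Fin.append 0 u - Fin.append 0 v := by
  ext i
  refine Fin.addCases (fun i => ?_) (fun i => ?_) i <;> simp

lemma simpleCoeff_append_zero (v : Fin k → ℤ) (j : ℕ) :
    simpleCoeff j (Fin.append (0 : Fin (m + 1) → ℤ) v) =
      if m < j then simpleCoeff (j - (m + 1)) v else 0 := by
  simp only [simpleCoeff_apply, sum_filter, Fin.sum_univ_add, Fin.append_left, Fin.append_right,
    Pi.zero_apply, ite_self, sum_const_zero, zero_add, Fin.val_natAdd]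
  split_ifs with h
  · exact sum_congr rfl fun i _ => if_congr (by omega) rfl rfl
  · exact sum_eq_zero fun i _ => if_neg (by omega)

def BRoot.shift (m : ℕ) (y : BRoot k) : BRoot (m + 1 + k) :=
  ⟨Fin.append 0 y.1, by
    rcases y.2 with ⟨a, ha⟩ | ⟨a, b, hab, ha | ha⟩
    · exact Or.inl ⟨_, by rw [ha, append_zero_ev]⟩
    · exact Or.inr ⟨_, _, (Fin.natAdd_lt_natAdd_iff _).2 hab,
        Or.inl (by rw [ha, append_zero_sub, append_zero_ev, append_zero_ev])⟩
    · exact Or.inr ⟨_, _, (Fin.natAdd_lt_natAdd_iff _).2 hab,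
        Or.inr (by rw [ha, append_zero_add, append_zero_ev, append_zero_ev])⟩⟩

lemma BRoot.coeff_shift (y : BRoot k) (j : ℕ) :
    (y.shift m).coeff j = if m < j then y.coeff (j - (m + 1)) else 0 :=
  simpleCoeff_append_zero _ j

lemma BRoot.shift_bLe_shift_iff (y z : BRoot k) :
    bLe _ (y.shift m) (z.shift m) ↔ bLe k y z := by
  simp only [bLe_iff_coeff_le, coeff_shift]
  constructor
  · intro h j hj
    simpa [if_pos (show m < m + 1 + j by omega), show m + 1 + j - (m + 1) = j by omega]
      using h (m + 1 + j) (by omega)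
  · intro h j hj
    split_ifs
    exacts [h _ (by omega), le_rfl]

variable (m k) in
def intervalEmb : aLe m ↪r bLe (m + 1 + k) :=
  RelEmbedding.ofMapRelIff (ARoot.toBRoot k) ARoot.toBRoot_bLe_toBRoot_iff

variable (m k) in
def shiftEmb : bLe k ↪r bLe (m + 1 + k) :=
  RelEmbedding.ofMapRelIff (BRoot.shift m) BRoot.shift_bLe_shift_iff

variable (m k) in
def midRoot : BRoot (m + 1 + k) := simpleRoot ⟨m, by omega⟩

lemma coeff_intervalEmb (r : ARoot m) (j : ℕ) :
    (intervalEmb m k r).coeff j = if r.1.1 ≤ j + 1 ∧ j + 1 ≤ r.1.2 then 1 else 0 :=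
  ARoot.coeff_toBRoot r j

lemma coeff_shiftEmb (y : BRoot k) (j : ℕ) :
    (shiftEmb m k y).coeff j = if m < j then y.coeff (j - (m + 1)) else 0 :=
  BRoot.coeff_shift y j

lemma coeff_midRoot {j : ℕ} (hj : j < m + 1 + k) :
    (midRoot m k).coeff j = if j = m then 1 else 0 :=
  coeff_simpleRoot _ hj

lemma coeff_intervalEmb_self (r : ARoot m) : (intervalEmb m k r).coeff m = 0 := by
  have := r.2
  rw [coeff_intervalEmb, if_neg (by omega)]

lemma coeff_shiftEmb_self (y : BRoot k) : (shiftEmb m k y).coeff m = 0 := by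
  rw [coeff_shiftEmb, if_neg (lt_irrefl m)]

lemma intervalEmb_eq_simpleRoot_iff {r : ARoot m} {j : Fin (m + 1 + k)} :
    intervalEmb m k r = simpleRoot j ↔ aSimple m r ∧ r.1.1 = j + 1 := by
  have := r.2
  constructor
  · intro h
    have h₁ := congrArg (BRoot.coeff · (r.1.1 - 1)) h
    have h₂ := congrArg (BRoot.coeff · (r.1.2 - 1)) h
    simp only [coeff_intervalEmb, coeff_simpleRoot j (show r.1.1 - 1 < m + 1 + k by omega),
      coeff_simpleRoot j (show r.1.2 - 1 < m + 1 + k by omega)] at h₁ h₂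
    unfold aSimple
    split_ifs at h₁ h₂ <;> omega
  · rintro ⟨hr : r.1.1 = r.1.2, hj⟩
    refine ext_coeff fun i hi => ?_
    rw [coeff_intervalEmb, coeff_simpleRoot j hi]
    split_ifs <;> omega

lemma intervalEmb_ne_midRoot (r : ARoot m) : intervalEmb m k r ≠ midRoot m k := by
  have := r.2
  rw [midRoot, Ne, intervalEmb_eq_simpleRoot_iff, Fin.val_mk]
  omega

lemma shiftEmb_ne_simpleRoot {y : BRoot k} {j : Fin (m + 1 + k)} (hj : (j : ℕ) ≤ m) :
    shiftEmb m k y ≠ simpleRoot j := by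
  intro h
  have := congrArg (BRoot.coeff · j) h
  simp only [coeff_shiftEmb, coeff_simpleRoot j j.isLt] at this
  split_ifs at this <;> omega

lemma shiftEmb_ne_midRoot (y : BRoot k) : shiftEmb m k y ≠ midRoot m k :=
  shiftEmb_ne_simpleRoot (j := ⟨m, _⟩) le_rfl

lemma not_intervalEmb_bLe_shiftEmb (r : ARoot m) (y : BRoot k) :
    ¬ bLe _ (intervalEmb m k r) (shiftEmb m k y) ∧
      ¬ bLe _ (shiftEmb m k y) (intervalEmb m k r) := by
  have := r.2
  rw [bLe_iff_coeff_le, bLe_iff_coeff_le]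
  obtain ⟨j, hj, hpos⟩ := y.exists_coeff_pos
  constructor
  · intro h
    have h' := h (r.1.1 - 1) (by omega)
    rw [coeff_intervalEmb, coeff_shiftEmb] at h'
    split_ifs at h' <;> omega
  · intro h
    have h' := h (m + 1 + j) (by omega)
    rw [coeff_intervalEmb, coeff_shiftEmb, if_pos (by omega), if_neg (by omega),
      show m + 1 + j - (m + 1) = j by omega] at h'
    omega

lemma intervalEmb_ne_shiftEmb (r : ARoot m) (y : BRoot k) :
    intervalEmb m k r ≠ shiftEmb m k y :=
  fun h => (not_intervalEmb_bLe_shiftEmb r y).1 (h ▸ refl _)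

lemma exists_natAdd_eq {a : Fin (m + 1 + k)} (ha : m < a) :
    ∃ b : Fin k, Fin.natAdd (m + 1) b = a :=
  ⟨⟨a - (m + 1), by omega⟩, Fin.ext (by simp; omega)⟩

lemma exists_intervalEmb_or_shiftEmb_eq {x : BRoot (m + 1 + k)} (hx : x.coeff m = 0) :
    (∃ r, intervalEmb m k r = x) ∨ ∃ y, shiftEmb m k y = x := by
  rcases x.2 with ⟨a, ha⟩ | ⟨a, b, hab : (a : ℕ) < b, ha | ha⟩ <;>
    simp only [BRoot.coeff, ha, map_add, map_sub, simpleCoeff_ev] at hx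
  · obtain ⟨a, rfl⟩ := exists_natAdd_eq (a := a) (by split_ifs at hx <;> omega)
    exact Or.inr ⟨⟨ev k a, Or.inl ⟨a, rfl⟩⟩, Subtype.ext ((append_zero_ev a).trans ha.symm)⟩
  · by_cases hb : (b : ℕ) ≤ m
    · refine Or.inl ⟨⟨(a + 1, b), by omega⟩, Subtype.ext ?_⟩
      rw [ha]
      rfl
    · obtain ⟨a, rfl⟩ := exists_natAdd_eq (a := a) (by split_ifs at hx <;> omega)
      obtain ⟨b, rfl⟩ := exists_natAdd_eq (a := b) (by omega)
      refine Or.inr ⟨⟨ev k a - ev k b, Or.inr ⟨a, b, by simpa using hab, Or.inl rfl⟩⟩, ?_⟩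
      exact Subtype.ext ((append_zero_sub _ _).trans (by rw [append_zero_ev, append_zero_ev, ha]))
  · obtain ⟨a, rfl⟩ := exists_natAdd_eq (a := a) (by split_ifs at hx <;> omega)
    obtain ⟨b, rfl⟩ := exists_natAdd_eq (a := b) (by simp at hab ⊢; omega)
    refine Or.inr ⟨⟨ev k a + ev k b, Or.inr ⟨a, b, by simpa using hab, Or.inr rfl⟩⟩, ?_⟩
    exact Subtype.ext ((append_zero_add _ _).trans (by rw [append_zero_ev, append_zero_ev, ha]))

end Blocks

section Bijection

variable {m k : ℕ} {S : Finset (BRoot (m + 1 + k))} {A₁ : Finset (ARoot m)} {A₂ : Finset (BRoot k)}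
  {A : Finset (BRoot (m + 1 + k))}

open scoped Classical

variable (m k) in
noncomputable def breakingAtMid : Finset (Finset (BRoot (m + 1 + k))) :=
  (bAntichains _).filter fun A => firstBreak A = some ⟨m, by omega⟩

variable (m k) in
noncomputable def pieces :
    Finset (Finset (BRoot (m + 1 + k)) × Finset (ARoot m) × Finset (BRoot k)) :=
  ({midRoot m k} : Finset _).powerset ×ˢ aAntichainsPP m ×ˢ bAntichains k

noncomputable def glue (S : Finset (BRoot (m + 1 + k))) (A₁ : Finset (ARoot m))
    (A₂ : Finset (BRoot k)) : Finset (BRoot (m + 1 + k)) :=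
  S ∪ A₁.map (intervalEmb m k).toEmbedding ∪ A₂.map (shiftEmb m k).toEmbedding

noncomputable def unglue (A : Finset (BRoot (m + 1 + k))) :
    Finset (BRoot (m + 1 + k)) × Finset (ARoot m) × Finset (BRoot k) :=
  (A.filter (· = midRoot m k), A.preimage _ (intervalEmb m k).injective.injOn,
    A.preimage _ (shiftEmb m k).injective.injOn)

lemma mem_glue {x : BRoot (m + 1 + k)} :
    x ∈ glue S A₁ A₂ ↔
      x ∈ S ∨ (∃ r ∈ A₁, intervalEmb m k r = x) ∨ ∃ y ∈ A₂, shiftEmb m k y = x := by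
  simp [glue]

lemma eq_midRoot_of_mem_pieces (hp : (S, A₁, A₂) ∈ pieces m k) {x : BRoot (m + 1 + k)}
    (hx : x ∈ S) : x = midRoot m k :=
  mem_singleton.1 ((mem_powerset.1 (mem_product.1 hp).1) hx)

lemma mem_blocks (hA : A ∈ breakingAtMid m k) {x : BRoot (m + 1 + k)} (hx : x ∈ A) :
    x = midRoot m k ∨ (∃ r, intervalEmb m k r = x) ∨ ∃ y, shiftEmb m k y = x := by
  simp only [breakingAtMid, mem_filter, mem_bAntichains, firstBreak_eq_some_iff] at hA
  obtain ⟨hanti, hbreak, -⟩ := hA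
  by_cases hmid : x = midRoot m k
  · exact Or.inl hmid
  · exact Or.inr (exists_intervalEmb_or_shiftEmb_eq
      ((isBreak_iff_of_isAntichain hanti).1 hbreak x hx hmid))

lemma isAntichain_glue (hS : S ⊆ {midRoot m k}) (h₁ : IsAntichain (aLe m) (A₁ : Set (ARoot m)))
    (h₂ : IsAntichain (bLe k) (A₂ : Set (BRoot k))) :
    IsAntichain (bLe _) (glue S A₁ A₂ : Set (BRoot (m + 1 + k))) := by
  have hmid : ∀ x ∈ S, x = midRoot m k := fun x hx => mem_singleton.1 (hS hx)
  simp only [glue, coe_union, coe_map, RelEmbedding.coe_toEmbedding]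
  refine isAntichain_union.2
    ⟨isAntichain_union.2 ⟨?_, h₁.image_relEmbedding _, ?_⟩, h₂.image_relEmbedding _, ?_⟩
  · exact Set.Subsingleton.isAntichain (fun x hx y hy => (hmid x hx).trans (hmid y hy).symm) _
  · rintro x hx _ ⟨r, -, rfl⟩ -
    rw [hmid x hx]
    exact not_bLe_simpleRoot_of_coeff_eq_zero (coeff_intervalEmb_self r)
  · rintro x (hx | ⟨r, -, rfl⟩) _ ⟨y, -, rfl⟩ -
    · rw [hmid x hx]
      exact not_bLe_simpleRoot_of_coeff_eq_zero (coeff_shiftEmb_self y)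
    · exact not_intervalEmb_bLe_shiftEmb r y

lemma glue_mem_breakingAtMid (hp : (S, A₁, A₂) ∈ pieces m k) :
    glue S A₁ A₂ ∈ breakingAtMid m k := by
  simp only [pieces, mem_product, mem_powerset, aAntichainsPP, mem_filter, mem_univ, true_and,
    mem_bAntichains] at hp
  obtain ⟨hS, ⟨h₁, hsimple, hfull⟩, h₂⟩ := hp
  have hanti := isAntichain_glue hS h₁ h₂
  simp only [breakingAtMid, mem_filter, mem_bAntichains, firstBreak_eq_some_iff]
  refine ⟨hanti, (isBreak_iff_of_isAntichain hanti).2 ?_, fun j hj => not_isBreak_iff.2 ⟨?_, ?_⟩⟩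
  · intro x hx hne
    rcases mem_glue.1 hx with hxS | ⟨r, -, rfl⟩ | ⟨y, -, rfl⟩
    · exact absurd (mem_singleton.1 (hS hxS)) hne
    · exact coeff_intervalEmb_self r
    · exact coeff_shiftEmb_self y
  · intro hj'
    rcases mem_glue.1 hj' with hjS | ⟨r, hr, hrj⟩ | ⟨y, -, hyj⟩
    · exact hj.ne (simpleRoot_injective (mem_singleton.1 (hS hjS)))
    · exact hsimple r hr (intervalEmb_eq_simpleRoot_iff.1 hrj).1
    · exact shiftEmb_ne_simpleRoot (le_of_lt hj) hyj
  · obtain ⟨r, hr, h1, h2⟩ := hfull (j + 1) (by omega) (Fin.lt_def.1 hj)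
    refine ⟨_, mem_glue.2 (Or.inr (Or.inl ⟨r, hr, rfl⟩)), ?_⟩
    rw [coeff_intervalEmb, if_pos ⟨h1, h2⟩]
    exact one_ne_zero

lemma unglue_mem_pieces (hA : A ∈ breakingAtMid m k) : unglue A ∈ pieces m k := by
  have hA' := hA
  simp only [breakingAtMid, mem_filter, mem_bAntichains, firstBreak_eq_some_iff] at hA'
  obtain ⟨hanti, -, hbefore⟩ := hA'
  have hbefore' : ∀ j (hj : j < m), simpleRoot ⟨j, by omega⟩ ∉ A ∧ ∃ x ∈ A, x.coeff j ≠ 0 :=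
    fun j hj => not_isBreak_iff.1 (hbefore ⟨j, by omega⟩ (Fin.lt_def.2 hj))
  simp only [unglue, pieces, mem_product, mem_powerset, aAntichainsPP, mem_filter, mem_univ,
    true_and, mem_bAntichains, coe_preimage]
  refine ⟨fun x hx => by simp [(mem_filter.1 hx).2],
    ⟨hanti.preimage_relEmbedding _, fun r hr hsimple => ?_, fun t ht1 htm => ?_⟩,
    hanti.preimage_relEmbedding _⟩
  · have := r.2
    have hr_eq : intervalEmb m k r = simpleRoot ⟨r.1.1 - 1, by omega⟩ :=
      intervalEmb_eq_simpleRoot_iff.2 ⟨hsimple, show r.1.1 = r.1.1 - 1 + 1 by omega⟩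
    exact (hbefore' (r.1.1 - 1) (by omega)).1 (hr_eq ▸ mem_preimage.1 hr)
  · obtain ⟨x, hx, hcoeff⟩ := (hbefore' (t - 1) (by omega)).2
    rcases mem_blocks hA hx with rfl | ⟨r, rfl⟩ | ⟨y, rfl⟩
    · rw [coeff_midRoot (by omega), if_neg (by omega)] at hcoeff
      exact absurd rfl hcoeff
    · refine ⟨r, mem_preimage.2 hx, ?_⟩
      rw [coeff_intervalEmb] at hcoeff
      split_ifs at hcoeff with h
      · omega
      · exact absurd rfl hcoeff
    · rw [coeff_shiftEmb, if_neg (by omega)] at hcoeff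
      exact absurd rfl hcoeff

lemma unglue_glue (hp : (S, A₁, A₂) ∈ pieces m k) :
    unglue (glue S A₁ A₂) = (S, A₁, A₂) := by
  refine Prod.ext ?_ (Prod.ext ?_ ?_)
  · ext x
    simp only [unglue, mem_filter, mem_glue]
    constructor
    · rintro ⟨hx | ⟨r, -, rfl⟩ | ⟨y, -, rfl⟩, hxmid⟩
      · exact hx
      · exact absurd hxmid (intervalEmb_ne_midRoot r)
      · exact absurd hxmid (shiftEmb_ne_midRoot y)
    · exact fun hx => ⟨Or.inl hx, eq_midRoot_of_mem_pieces hp hx⟩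
  · ext r
    simp only [unglue, mem_preimage, mem_glue]
    constructor
    · rintro (hr | ⟨r', hr', hrr⟩ | ⟨y, -, hy⟩)
      · exact absurd (eq_midRoot_of_mem_pieces hp hr) (intervalEmb_ne_midRoot r)
      · rwa [← (intervalEmb m k).injective hrr]
      · exact absurd hy.symm (intervalEmb_ne_shiftEmb r y)
    · exact fun hr => Or.inr (Or.inl ⟨r, hr, rfl⟩)
  · ext y
    simp only [unglue, mem_preimage, mem_glue]
    constructor
    · rintro (hy | ⟨r, -, hr⟩ | ⟨y', hy', hyy⟩)
      · exact absurd (eq_midRoot_of_mem_pieces hp hy) (shiftEmb_ne_midRoot y)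
      · exact absurd hr (intervalEmb_ne_shiftEmb r y)
      · rwa [← (shiftEmb m k).injective hyy]
    · exact fun hy => Or.inr (Or.inr ⟨y, hy, rfl⟩)

lemma glue_unglue (hA : A ∈ breakingAtMid m k) :
    glue (unglue A).1 (unglue A).2.1 (unglue A).2.2 = A := by
  ext x
  simp only [mem_glue, unglue, mem_filter, mem_preimage]
  constructor
  · rintro (⟨hx, -⟩ | ⟨r, hr, rfl⟩ | ⟨y, hy, rfl⟩) <;> assumption
  · intro hx
    rcases mem_blocks hA hx with rfl | ⟨r, rfl⟩ | ⟨y, rfl⟩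
    · exact Or.inl ⟨hx, rfl⟩
    · exact Or.inr (Or.inl ⟨r, hx, rfl⟩)
    · exact Or.inr (Or.inr ⟨y, hx, rfl⟩)

lemma card_glue (hp : (S, A₁, A₂) ∈ pieces m k) :
    #(glue S A₁ A₂) = #S + #A₁ + #A₂ := by
  rw [glue, card_union_of_disjoint, card_union_of_disjoint, card_map, card_map]
  · refine disjoint_left.2 fun x hx hx' => ?_
    obtain ⟨r, -, rfl⟩ := mem_map.1 hx'
    exact intervalEmb_ne_midRoot r (eq_midRoot_of_mem_pieces hp hx)
  · refine disjoint_left.2 fun x hx hx' => ?_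
    obtain ⟨y, -, rfl⟩ := mem_map.1 hx'
    rcases mem_union.1 hx with hx | hx
    · exact shiftEmb_ne_midRoot y (eq_midRoot_of_mem_pieces hp hx)
    · obtain ⟨r, -, hr⟩ := mem_map.1 hx
      exact intervalEmb_ne_shiftEmb r y hr

lemma sum_breakingAtMid :
    ∑ A ∈ breakingAtMid m k, X ^ #A = (1 + X) * (CatppA m * CatB k) := calc
  _ = ∑ p ∈ pieces m k, X ^ (#p.1 + #p.2.1 + #p.2.2) := by
    refine (sum_nbij' (fun p => glue p.1 p.2.1 p.2.2) unglue (fun _ => glue_mem_breakingAtMid)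
      (fun _ => unglue_mem_pieces) (fun _ => unglue_glue) (fun _ => glue_unglue)
      (fun _ hp => ?_)).symm
    rw [card_glue hp]
  _ = (1 + X) * (CatppA m * CatB k) := by
    rw [← sum_powerset_singleton_pow_card (midRoot m k) (X : ℚ[X]), CatppA_eq_sum, CatB_eq_sum,
      pieces]
    simp only [sum_product, pow_add, mul_assoc, ← mul_sum, ← sum_mul]

end Bijection

lemma sum_firstBreak_eq_some {n : ℕ} (m : Fin n) :
    ∑ A ∈ bAntichains n with firstBreak A = some m, X ^ #A =
      (1 + X) * (CatppA m * CatB (n - m - 1)) := by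
  obtain ⟨m, hm⟩ := m
  obtain ⟨k, rfl⟩ : ∃ k, n = m + 1 + k := ⟨n - m - 1, by omega⟩
  rw [show m + 1 + k - m - 1 = k by omega]
  exact sum_breakingAtMid

/-- The identity `Cat(Bₙ; q) = Cat⁺⁺(Bₙ; q) + (1+q)·Σᵢ₌₀ⁿ⁻¹ Cat⁺⁺(Aᵢ; q)·Cat(Bₙ₋ᵢ₋₁; q)`. -/
theorem catB_from_catpp (n : ℕ) :
    CatB n = CatppB n + (1 + X) * ∑ i ∈ Finset.range n, CatppA i * CatB (n - i - 1) := by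
  rw [CatB_eq_CatppB_add_sum_firstBreak, mul_sum,
    ← Fin.sum_univ_eq_sum_range fun i => (1 + X) * (CatppA i * CatB (n - i - 1))]
  simp only [sum_firstBreak_eq_some]
end
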